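/- Let K_{θ,μ,σ}(t) = exp(−((Λ_θ(t)−μ)/σ)²/2)·Λ'_θ(t), where Λ_θ is the Yeo–Johnson transformation. If θ₁ ≠ θ₂ with θ₁, θ₂ ∈ [0,2], then for any μ₁, μ₂ ∈ ℝ and σ₁, σ₂ > 0, the limit as t → +∞ of K_{θ₁,μ₁,σ₁}(t)/K_{θ₂,μ₂,σ₂}(t) is either 0 or +∞. -/

import Mathlib

/-- The Yeo–Johnson transformation. -/
noncomputable def YJ (θ t : ℝ) : ℝ :=
  if 0 ≤ t then
    if θ = 0 then Real.log (t + 1) else ((t + 1) ^ θ - 1) / θ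
  else
    if θ = 2 then -Real.log (-t + 1) else -(((-t + 1) ^ (2 - θ) - 1) / (2 - θ))


/-- The derivative of the Yeo–Johnson transformation. -/
noncomputable def YJderiv (θ t : ℝ) : ℝ :=
  if 0 ≤ t then (t + 1) ^ (θ - 1) else (1 - t) ^ (1 - θ)

/-- The function `K_{θ,μ,σ}` from Assumption (A7). -/
noncomputable def Kfun (θ μ σ t : ℝ) : ℝ :=
  Real.exp (-(1 / 2) * ((YJ θ t - μ) / σ) ^ 2) * YJderiv θ t

/-!
For `t ≥ 0` the ratio `K_{θ₁,μ₁,σ₁}(t) / K_{θ₂,μ₂,σ₂}(t)` is the exponential of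
`(((Λ_{θ₂}(t) - μ₂)/σ₂)² - ((Λ_{θ₁}(t) - μ₁)/σ₁)²)/2 + (θ₁ - θ₂) log (t + 1)`.
If `θ₁ < θ₂` then `θ₂ > 0`, so `Λ_{θ₂}(t) ~ (t + 1)^θ₂ / θ₂`, while `Λ_{θ₁}(t)` is `o((t + 1)^θ₂)`
and `log (t + 1)` is `o((t + 1)^(2θ₂))`. The exponent is therefore equivalent to
`(t + 1)^(2θ₂) / (2 θ₂² σ₂²) → ∞`, and the ratio tends to `+∞`. For `θ₂ < θ₁` take reciprocals.
-/

open Filter Asymptotics Real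

noncomputable def boxCox (θ s : ℝ) : ℝ := if θ = 0 then log s else (s ^ θ - 1) / θ

lemma YJ_of_nonneg {θ t : ℝ} (ht : 0 ≤ t) : YJ θ t = boxCox θ (t + 1) := by
  simp only [YJ, boxCox, if_pos ht]

lemma Kfun_div_Kfun_of_nonneg {θ₁ θ₂ μ₁ μ₂ σ₁ σ₂ t : ℝ} (ht : 0 ≤ t) :
    Kfun θ₁ μ₁ σ₁ t / Kfun θ₂ μ₂ σ₂ t =
      exp ((((boxCox θ₂ (t + 1) - μ₂) / σ₂) ^ 2 - ((boxCox θ₁ (t + 1) - μ₁) / σ₁) ^ 2) / 2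
        + (θ₁ - θ₂) * log (t + 1)) := by
  have hpos : 0 < t + 1 := by linarith
  rw [Kfun, Kfun, YJderiv, YJderiv, if_pos ht, if_pos ht, YJ_of_nonneg ht, YJ_of_nonneg ht,
    mul_div_mul_comm, ← exp_sub, ← rpow_sub hpos, rpow_def_of_pos hpos, ← exp_add]
  ring_nf

lemma isLittleO_rpow_rpow_atTop {a b : ℝ} (h : a < b) :
    (fun x : ℝ => x ^ a) =o[atTop] fun x => x ^ b := by
  refine (isLittleO_iff_tendsto' ?_).2 ?_
  · filter_upwards [eventually_gt_atTop 0] with x hx h0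
    exact absurd h0 (rpow_pos_of_pos hx b).ne'
  · refine (tendsto_rpow_neg_atTop (sub_pos.2 h)).congr' ?_
    filter_upwards [eventually_gt_atTop 0] with x hx
    rw [← rpow_sub hx, neg_sub]

lemma boxCox_sub_isEquivalent {θ : ℝ} (hθ : 0 < θ) (μ : ℝ) :
    (fun s => boxCox θ s - μ) ~[atTop] fun s => s ^ θ / θ := by
  have hlim : Tendsto (norm ∘ fun s : ℝ => s ^ θ / θ) atTop atTop :=
    tendsto_norm_atTop_atTop.comp ((tendsto_rpow_atTop hθ).atTop_div_const hθ)
  have hform : (fun s => boxCox θ s - μ) = fun s => s ^ θ / θ + -(1 / θ + μ) := by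
    ext s
    simp only [boxCox, if_neg hθ.ne']
    ring
  rw [hform]
  exact IsEquivalent.refl.add_const_of_norm_tendsto_atTop hlim

lemma boxCox_sub_isLittleO {θ₁ θ₂ : ℝ} (h0 : 0 ≤ θ₁) (h : θ₁ < θ₂) (μ : ℝ) :
    (fun s => boxCox θ₁ s - μ) =o[atTop] fun s => s ^ θ₂ := by
  rcases h0.eq_or_lt with rfl | hθ₁
  · have hconst : (fun _ : ℝ => μ) =o[atTop] fun s => s ^ θ₂ :=
      isLittleO_const_left.2 <| .inr <| tendsto_norm_atTop_atTop.comp (tendsto_rpow_atTop h)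
    simpa [boxCox] using (isLittleO_log_rpow_atTop h).sub hconst
  · exact (boxCox_sub_isEquivalent hθ₁ μ).trans_isLittleO <|
      (isLittleO_rpow_rpow_atTop h).const_mul_left θ₁⁻¹ |>.congr_left fun s => by ring

lemma isEquivalent_sq_sub_sq {α β : Type*} [NormedField β] {l : Filter α} {a b v : α → β}
    (ha : a ~[l] v) (hb : b =o[l] v) : (fun x => a x ^ 2 - b x ^ 2) ~[l] fun x => v x ^ 2 :=
  (ha.pow 2).sub_isLittleO (hb.pow two_pos)

lemma tendsto_boxCox_logRatio_atTop {θ₁ θ₂ : ℝ} (h0 : 0 ≤ θ₁) (h : θ₁ < θ₂) (μ₁ μ₂ σ₁ : ℝ)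
    {σ₂ : ℝ} (hσ₂ : σ₂ ≠ 0) :
    Tendsto (fun s => (((boxCox θ₂ s - μ₂) / σ₂) ^ 2 - ((boxCox θ₁ s - μ₁) / σ₁) ^ 2) / 2
      + (θ₁ - θ₂) * log s) atTop atTop := by
  have hθ₂ : 0 < θ₂ := h0.trans_lt h
  set c : ℝ := (θ₂ * σ₂)⁻¹
  have hc : c ≠ 0 := inv_ne_zero (mul_ne_zero hθ₂.ne' hσ₂)
  have ha : (fun s => (boxCox θ₂ s - μ₂) / σ₂) ~[atTop] fun s => c * s ^ θ₂ := by
    refine ((boxCox_sub_isEquivalent hθ₂ μ₂).div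
      (IsEquivalent.refl (u := fun _ => σ₂))).congr_right ?_
    filter_upwards with s
    simp only [Pi.div_apply, c]
    field_simp
  have hb : (fun s => (boxCox θ₁ s - μ₁) / σ₁) =o[atTop] fun s => c * s ^ θ₂ :=
    (((boxCox_sub_isLittleO h0 h μ₁).const_mul_left σ₁⁻¹).const_mul_right hc).congr_left
      fun s => inv_mul_eq_div _ _
  have hv : (fun s : ℝ => (c * s ^ θ₂) ^ 2 / 2) =ᶠ[atTop] fun s => c ^ 2 / 2 * s ^ (2 * θ₂) := by
    filter_upwards [eventually_ge_atTop 0] with s hs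
    rw [mul_comm 2 θ₂, rpow_mul hs, rpow_two]
    ring
  have hc2 : 0 < c ^ 2 / 2 := by positivity
  have hlog : (fun s => (θ₁ - θ₂) * log s) =o[atTop] fun s => (c * s ^ θ₂) ^ 2 / 2 :=
    ((isLittleO_log_rpow_atTop (mul_pos two_pos hθ₂)).const_mul_left _).trans_isBigO <|
      (isBigO_self_const_mul hc2.ne' _ _).congr' .rfl hv.symm
  have hlim : Tendsto (fun s : ℝ => (c * s ^ θ₂) ^ 2 / 2) atTop atTop :=
    ((tendsto_rpow_atTop (mul_pos two_pos hθ₂)).const_mul_atTop hc2).congr' hv.symm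
  have hequiv := ((isEquivalent_sq_sub_sq ha hb).div
    (IsEquivalent.refl (u := fun _ => (2 : ℝ)))).add_isLittleO hlog
  exact hequiv.symm.tendsto_atTop hlim

lemma tendsto_Kfun_div_Kfun_atTop {θ₁ θ₂ : ℝ} (h0 : 0 ≤ θ₁) (h : θ₁ < θ₂) (μ₁ μ₂ σ₁ : ℝ)
    {σ₂ : ℝ} (hσ₂ : σ₂ ≠ 0) :
    Tendsto (fun t => Kfun θ₁ μ₁ σ₁ t / Kfun θ₂ μ₂ σ₂ t) atTop atTop := by
  have hexp := tendsto_exp_atTop.comp <| (tendsto_boxCox_logRatio_atTop h0 h μ₁ μ₂ σ₁ hσ₂).comp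
    (tendsto_atTop_add_const_right atTop 1 tendsto_id)
  refine hexp.congr' ?_
  filter_upwards [eventually_ge_atTop 0] with t ht
  exact (Kfun_div_Kfun_of_nonneg ht).symm

/-- If `θ₁ ≠ θ₂` with `θ₁, θ₂ ∈ [0,2]`, then the ratio `K_{θ₁,μ₁,σ₁}/K_{θ₂,μ₂,σ₂}`
tends to 0 or to +∞ as `t → +∞`. -/
theorem Kfun_ratio_tendsto_atTop (θ₁ θ₂ μ₁ μ₂ σ₁ σ₂ : ℝ)
    (hθ₁ : θ₁ ∈ Set.Icc (0 : ℝ) 2) (hθ₂ : θ₂ ∈ Set.Icc (0 : ℝ) 2)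
    (hne : θ₁ ≠ θ₂) (hσ₁ : 0 < σ₁) (hσ₂ : 0 < σ₂) :
    Filter.Tendsto (fun t => Kfun θ₁ μ₁ σ₁ t / Kfun θ₂ μ₂ σ₂ t) Filter.atTop (nhds 0) ∨
    Filter.Tendsto (fun t => Kfun θ₁ μ₁ σ₁ t / Kfun θ₂ μ₂ σ₂ t) Filter.atTop Filter.atTop := by
  rcases hne.lt_or_gt with h | h
  · exact .inr (tendsto_Kfun_div_Kfun_atTop hθ₁.1 h μ₁ μ₂ σ₁ hσ₂.ne')
  · refine .inl ?_
    simpa only [Pi.inv_def, inv_div] using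
      (tendsto_Kfun_div_Kfun_atTop hθ₂.1 h μ₂ μ₁ σ₂ hσ₁.ne').inv_tendsto_atTop
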